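/- arXiv:2503.21783 — 4 statements merged into one kernel-verified Lean document; each statement's English description precedes it below -/
import Mathlib

section
/- If f : A* → A is a nullifying function (on the nonempty finite sequences of an algebra A) and f(x,y) = 0 for all x, y ∈ A, then f(s₁,...,sₙ) = 0 for every nonempty finite sequence s₁,...,sₙ of elements of A. -/
/-- Composite of left multiplications: `Lmul [t₁,…,t_r] x = t₁ * (t₂ * (⋯ * (t_r * x)))`. -/
def Lmul {A : Type*} [Mul A] (ts : List A) (x : A) : A := ts.foldr (· * ·) x

/-- A nullifying function on the nonempty finite sequences of `A`, with associated
positive integer `r` for axiom (V). -/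
def IsNullifying {A : Type*} [NonUnitalNonAssocCommRing A] (f : List A → A) (r : ℕ) : Prop :=
  0 < r ∧
  -- (I) permutation invariance
  (∀ l l' : List A, l.Perm l' → f l = f l') ∧
  -- (II)
  (∀ s t : List A, s ≠ [] → t ≠ [] → (f (s ++ [t.sum]) = f (s ++ t) ↔ f t = 0)) ∧
  -- (III)
  (∀ x : A, f [x] = 0) ∧
  -- (IV)
  (∀ s : List A, s ≠ [] → f (s ++ [(0 : A)]) = f s) ∧
  -- (V)
  (∀ ts : List A, ts.length = r → ∀ l : List A, Lmul ts (f l) = f (l.map (Lmul ts)))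

/-- if `f` is a nullifying function and `f(x, y) = 0` for all `x, y ∈ A`,
then `f` vanishes on every nonempty finite sequence. -/
theorem nullifying_of_pairs_zero {F A : Type*} [Field F] [NonUnitalNonAssocCommRing A]
    [Module F A] [SMulCommClass F A A] [IsScalarTower F A A]
    (f : List A → A) (r : ℕ) (hf : IsNullifying f r)
    (h2 : ∀ x y : A, f [x, y] = 0) :
    ∀ l : List A, l ≠ [] → f l = 0 := by
  obtain ⟨-, hperm, hII, hIII, -, -⟩ := hf
  suffices h : ∀ n (l : List A), l.length = n → l ≠ [] → f l = 0 by
    intro l hl; exact h l.length l rfl hl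
  intro n
  induction n using Nat.strong_induction_on with
  | _ n ih =>
    intro l hn hl
    match l, hl with
    | [x], _ => exact hIII x
    | [x, y], _ => exact h2 x y
    | a :: b :: c :: rest, _ =>
      have hp : (a :: b :: c :: rest).Perm ((c :: rest) ++ [a, b]) := by
        have : a :: b :: c :: rest = [a, b] ++ (c :: rest) := rfl
        rw [this]
        exact List.perm_append_comm
      have e1 : f (a :: b :: c :: rest) = f ((c :: rest) ++ [a, b]) := hperm _ _ hp
      have e2 : f ((c :: rest) ++ [([a, b] : List A).sum]) = f ((c :: rest) ++ [a, b]) :=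
        (hII (c :: rest) [a, b] (by simp) (by simp)).mpr (h2 a b)
      have e3 : f ((c :: rest) ++ [a + b + 0]) = 0 := by
        apply ih ((c :: rest) ++ [a + b + 0]).length ?_ _ rfl (by simp)
        simp at hn ⊢
        omega
      rw [e1, ← e2]
      simpa using e3
end

section
/- If φ : A → A' is a bijective n-multiplicative isomorphism between commutative algebras, then the function f(x₁,...,x_k) := φ⁻¹(φ(x₁+⋯+x_k) − φ(x₁) − ⋯ − φ(x_k)) is a nullifying function; in particular φ is additive if and only if f is identically zero. -/
lemma Lmul_cons {A : Type*} [Mul A] (a : A) (ts : List A) (x : A) :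
    Lmul (a :: ts) x = a * Lmul ts x := rfl

lemma Lmul_zero' {A : Type*} [MulZeroClass A] (ts : List A) : Lmul ts (0 : A) = 0 := by
  induction ts with
  | nil => rfl
  | cons a ts ih => rw [Lmul_cons, ih, mul_zero]

lemma Lmul_add' {A : Type*} [NonUnitalNonAssocRing A] (ts : List A) (x y : A) :
    Lmul ts (x + y) = Lmul ts x + Lmul ts y := by
  induction ts with
  | nil => rfl
  | cons a ts ih => rw [Lmul_cons, ih, mul_add, Lmul_cons, Lmul_cons]

lemma Lmul_sub' {A : Type*} [NonUnitalNonAssocRing A] (ts : List A) (x y : A) :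
    Lmul ts (x - y) = Lmul ts x - Lmul ts y := by
  induction ts with
  | nil => rfl
  | cons a ts ih => rw [Lmul_cons, ih, mul_sub, Lmul_cons, Lmul_cons]

lemma Lmul_sum' {A : Type*} [NonUnitalNonAssocRing A] (ts : List A) (l : List A) :
    (l.map (Lmul ts)).sum = Lmul ts l.sum := by
  induction l with
  | nil => simp [Lmul_zero']
  | cons a l ih => simp [ih, Lmul_add']

/-- the deviation-from-additivity function of an `n`-multiplicative
isomorphism is a nullifying function (with `r = n - 1`), and the isomorphism is additive
iff this function is identically zero. -/
theorem nmultIso_nullifying {F A A' : Type*} [Field F] [NonUnitalNonAssocCommRing A]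
    [Module F A] [SMulCommClass F A A] [IsScalarTower F A A]
    [NonUnitalNonAssocCommRing A']
    (n : ℕ) (hn : 2 ≤ n) (φ : A → A') (hbij : Function.Bijective φ)
    (hmul : ∀ ts : List A, ts.length = n - 1 → ∀ x : A,
      φ (Lmul ts x) = Lmul (ts.map φ) (φ x)) :
    IsNullifying (fun l : List A => Function.invFun φ (φ l.sum - (l.map φ).sum)) (n - 1) ∧
    ((∀ x y : A, φ (x + y) = φ x + φ y) ↔
      ∀ l : List A, l ≠ [] → Function.invFun φ (φ l.sum - (l.map φ).sum) = 0) := by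
  have hinj := hbij.1
  have hinv : ∀ y, φ (Function.invFun φ y) = y := fun y =>
    Function.rightInverse_invFun hbij.2 y
  -- φ 0 = 0
  have hφ0 : φ 0 = 0 := by
    set u := Function.invFun φ (0 : A') with hu
    have hts : (List.replicate (n - 1) u).length = n - 1 := by simp
    have h := hmul _ hts 0
    rw [Lmul_zero', List.map_replicate, hinv] at h
    obtain ⟨m, hm⟩ : ∃ m, n - 1 = m + 1 := ⟨n - 2, by omega⟩
    rw [hm, List.replicate_succ, Lmul_cons, zero_mul] at h
    exact h
  have hfz : ∀ z : A', Function.invFun φ z = 0 ↔ z = 0 := by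
    intro z
    constructor
    · intro h
      have h2 := hinv z
      rw [h, hφ0] at h2
      exact h2.symm
    · intro h
      subst h
      rw [← hφ0, Function.leftInverse_invFun hinj 0]
  have hfeq : ∀ z w : A', Function.invFun φ z = Function.invFun φ w ↔ z = w := by
    intro z w
    constructor
    · intro h
      have h2 := hinv z
      rw [h, hinv w] at h2
      exact h2.symm
    · intro h; rw [h]
  constructor
  · unfold IsNullifying
    refine ⟨by omega, ?_, ?_, ?_, ?_, ?_⟩
    · -- (I)
      intro l l' hperm
      simp only
      rw [hperm.sum_eq, (hperm.map φ).sum_eq]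
    · -- (II)
      intro s t hs ht
      simp only
      rw [hfeq, hfz]
      simp only [List.sum_append, List.map_append, List.map_cons, List.map_nil,
        List.sum_cons, List.sum_nil, add_zero, sub_right_inj, add_right_inj,
        sub_eq_zero]
    · -- (III)
      intro x
      simp only
      rw [hfz]
      simp
    · -- (IV)
      intro s hs
      simp only
      congr 1
      simp [hφ0]
    · -- (V)
      intro ts hts l
      simp only
      apply hinj
      rw [hmul ts hts, hinv, hinv, Lmul_sum', hmul ts hts, List.map_map]
      have hmap : l.map (φ ∘ Lmul ts) = (l.map φ).map (Lmul (ts.map φ)) := by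
        rw [List.map_map]
        exact List.map_congr_left fun a _ => hmul ts hts a
      rw [hmap, Lmul_sum', Lmul_sub']
  · constructor
    · intro hadd l hl
      have hsum : ∀ l : List A, φ l.sum = (l.map φ).sum := by
        intro l
        induction l with
        | nil => simpa using hφ0
        | cons a l ih => simp [hadd, ih]
      rw [hfz, hsum, sub_self]
    · intro h x y
      have h2 := h [x, y] (by simp)
      rw [hfz] at h2
      simp only [List.sum_cons, List.sum_nil, List.map_cons, List.map_nil, add_zero,
        sub_eq_zero] at h2
      exact h2
end

section
/- Let (A,e) be a J(α)-algebra (α ≠ 0,1) satisfying the Martindale-like conditions (i)–(iii), and let f be a nullifying function on A. Then for all a₁ ∈ A₁, a₀ ∈ A₀, a_α ∈ A_α, one has f(a₁, a₀, a_α) = 0. -/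
/-- The `lam`-eigenspace (as a set) of left multiplication by `e`. -/
def eigSet {F A : Type*} [Field F] [NonUnitalNonAssocCommRing A] [Module F A]
    (e : A) (lam : F) : Set A := {x | e * x = lam • x}

/-- `(A, e)` is a `J(α)`-algebra: `e` is idempotent, `α ≠ 0, 1`, `A` decomposes as the sum
of the `1`-, `0`- and `α`-eigenspaces of `L_e`, and the Jordan-type fusion law holds. -/
structure IsJAlg {F A : Type*} [Field F] [NonUnitalNonAssocCommRing A] [Module F A]
    (e : A) (α : F) : Prop where
  idem : e * e = e
  hα0 : α ≠ 0
  hα1 : α ≠ 1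
  decomp : ∀ x : A, ∃ x1 ∈ eigSet e (1 : F), ∃ x0 ∈ eigSet e (0 : F), ∃ xa ∈ eigSet e α,
    x = x1 + x0 + xa
  f11 : ∀ x ∈ eigSet e (1 : F), ∀ y ∈ eigSet e (1 : F), x * y ∈ eigSet e (1 : F)
  f10 : ∀ x ∈ eigSet e (1 : F), ∀ y ∈ eigSet e (0 : F), x * y = 0
  f1a : ∀ x ∈ eigSet e (1 : F), ∀ y ∈ eigSet e α, x * y ∈ eigSet e α
  f00 : ∀ x ∈ eigSet e (0 : F), ∀ y ∈ eigSet e (0 : F), x * y ∈ eigSet e (0 : F)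
  f0a : ∀ x ∈ eigSet e (0 : F), ∀ y ∈ eigSet e α, x * y ∈ eigSet e α
  faa : ∀ x ∈ eigSet e α, ∀ y ∈ eigSet e α, ∃ z1 ∈ eigSet e (1 : F), ∃ z0 ∈ eigSet e (0 : F),
    x * y = z1 + z0

/-- Martindale-like conditions (i)–(iii) for a `J(α)`-algebra. -/
def MartindaleJ {F A : Type*} [Field F] [NonUnitalNonAssocCommRing A] [Module F A]
    (e : A) (α : F) : Prop :=
  (∀ a ∈ eigSet e (1 : F), (∀ t ∈ eigSet e α, t * a = 0) → a = 0) ∧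
  (∀ a ∈ eigSet e (0 : F), (∀ t ∈ eigSet e α, t * a = 0) → a = 0) ∧
  (∀ a ∈ eigSet e (0 : F), (∀ t ∈ eigSet e (0 : F), t * a = 0) → a = 0) ∧
  (∀ a ∈ eigSet e α, (∀ t ∈ eigSet e (0 : F), t * a = 0) → a = 0)

section JAuxLemmas

lemma jaux_lmul_nil {A : Type*} [Mul A] (x : A) : Lmul [] x = x := rfl

lemma jaux_lmul_cons {A : Type*} [Mul A] (t : A) (w : List A) (x : A) :
    Lmul (t :: w) x = t * Lmul w x := rfl

lemma jaux_lmul_append {A : Type*} [Mul A] (w : List A) (t x : A) :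
    Lmul (w ++ [t]) x = Lmul w (t * x) := by
  unfold Lmul
  rw [List.foldr_append]
  rfl

lemma jaux_lmul_zero {A : Type*} [NonUnitalNonAssocCommRing A] (w : List A) :
    Lmul w (0 : A) = 0 := by
  induction w with
  | nil => rfl
  | cons t w ih => rw [jaux_lmul_cons, ih, mul_zero]

lemma jaux_lmul_add {A : Type*} [NonUnitalNonAssocCommRing A] (w : List A) (x y : A) :
    Lmul w (x + y) = Lmul w x + Lmul w y := by
  induction w with
  | nil => rfl
  | cons t w ih =>
    show t * Lmul w (x + y) = t * Lmul w x + t * Lmul w y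
    rw [ih, mul_add]

lemma jaux_rot3 {A : Type*} (x y z : A) : ([x, y, z] : List A).Perm [y, z, x] :=
  (List.Perm.swap y x [z]).trans (List.Perm.cons y (List.Perm.swap z x []))

end JAuxLemmas

/-- Lemma 4.2: `f(a₁, a₀, a_α) = 0` on eigencomponents. -/
theorem jalg_nullifying_triple {F A : Type*} [Field F] [NonUnitalNonAssocCommRing A]
    [Module F A] [SMulCommClass F A A] [IsScalarTower F A A]
    (e : A) (α : F) (h : IsJAlg e α) (hm : MartindaleJ e α)
    (f : List A → A) (r : ℕ) (hf : IsNullifying f r)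
    (a1 : A) (h1 : a1 ∈ eigSet e (1 : F))
    (a0 : A) (h0 : a0 ∈ eigSet e (0 : F))
    (aα : A) (ha : aα ∈ eigSet e α) :
    f [a1, a0, aα] = 0 := by
  obtain ⟨hr, hI, hII, hIII, hIV, hV⟩ := hf
  obtain ⟨m, rfl⟩ : ∃ m, r = m + 1 := ⟨r - 1, (Nat.succ_pred_eq_of_pos hr).symm⟩
  -- basic eigenspace lemmas
  have zmem : ∀ lam : F, (0 : A) ∈ eigSet e lam := by
    intro lam
    show e * 0 = lam • (0 : A)
    rw [mul_zero, smul_zero]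
  have submem : ∀ (lam : F) (x y : A), x ∈ eigSet e lam → y ∈ eigSet e lam →
      x - y ∈ eigSet e lam := by
    intro lam x y hx hy
    show e * (x - y) = lam • (x - y)
    rw [mul_sub, show e * x = lam • x from hx, show e * y = lam • y from hy, smul_sub]
  have negmem : ∀ (lam : F) (x : A), x ∈ eigSet e lam → -x ∈ eigSet e lam := by
    intro lam x hx
    simpa using submem lam 0 x (zmem lam) hx
  have smulmem : ∀ (lam q : F) (x : A), x ∈ eigSet e lam → q • x ∈ eigSet e lam := by
    intro lam q x hx
    show e * (q • x) = lam • (q • x)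
    rw [mul_smul_comm, show e * x = lam • x from hx, smul_smul, smul_smul, mul_comm]
  have smul_cancel : ∀ (q : F) (x : A), q ≠ 0 → q • x = 0 → x = 0 := by
    intro q x hq hqx
    have h2 : q⁻¹ • q • x = 0 := by rw [hqx, smul_zero]
    rwa [smul_smul, inv_mul_cancel₀ hq, one_smul] at h2
  -- independence of the three eigenspaces
  have indep : ∀ x1 ∈ eigSet e (1 : F), ∀ x0 ∈ eigSet e (0 : F), ∀ xα ∈ eigSet e α,
      x1 + x0 + xα = 0 → x1 = 0 ∧ x0 = 0 ∧ xα = 0 := by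
    intro x1 hx1 x0 hx0 xα hxα hsum
    have hx1' : e * x1 = (1 : F) • x1 := hx1
    have hx0' : e * x0 = (0 : F) • x0 := hx0
    have hxα' : e * xα = α • xα := hxα
    have hA : x1 + α • xα = 0 := by
      have hc := congrArg (e * ·) hsum
      simpa [mul_add, hx1', hx0', hxα'] using hc
    have hB : x1 + (α * α) • xα = 0 := by
      have hc := congrArg (e * ·) hA
      simpa [mul_add, hx1', mul_smul_comm, hxα', smul_smul] using hc
    have hαz : xα = 0 := by
      have h3 : (α - α * α) • xα = 0 := by
        rw [sub_smul, sub_eq_zero]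
        exact add_left_cancel (hA.trans hB.symm)
      refine smul_cancel _ _ ?_ h3
      have hfac : α - α * α = α * (1 - α) := by ring
      rw [hfac]
      exact mul_ne_zero h.hα0 (sub_ne_zero.mpr (Ne.symm h.hα1))
    have h1z : x1 = 0 := by simpa [hαz] using hA
    have h0z : x0 = 0 := by simpa [h1z, hαz] using hsum
    exact ⟨h1z, h0z, hαz⟩
  -- closure under left multiplication by A0-lists
  have L0mem0 : ∀ w : List A, (∀ t ∈ w, t ∈ eigSet e (0 : F)) →
      ∀ x ∈ eigSet e (0 : F), Lmul w x ∈ eigSet e (0 : F) := by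
    intro w
    induction w with
    | nil => exact fun _ x hx => hx
    | cons t w ih =>
      intro hw x hx
      exact h.f00 t (hw t (by simp)) _ (ih (fun s hs => hw s (by simp [hs])) x hx)
  have L0memα : ∀ w : List A, (∀ t ∈ w, t ∈ eigSet e (0 : F)) →
      ∀ x ∈ eigSet e α, Lmul w x ∈ eigSet e α := by
    intro w
    induction w with
    | nil => exact fun _ x hx => hx
    | cons t w ih =>
      intro hw x hx
      exact h.f0a t (hw t (by simp)) _ (ih (fun s hs => hw s (by simp [hs])) x hx)
  have L0mem1 : ∀ w : List A, (∀ t ∈ w, t ∈ eigSet e (0 : F)) →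
      ∀ x ∈ eigSet e (1 : F), Lmul w x ∈ eigSet e (1 : F) := by
    intro w
    induction w with
    | nil => exact fun _ x hx => hx
    | cons t w ih =>
      intro hw x hx
      have hmem := ih (fun s hs => hw s (by simp [hs])) x hx
      have hz : t * Lmul w x = 0 := by
        rw [mul_comm]
        exact h.f10 _ hmem t (hw t (by simp))
      show t * Lmul w x ∈ eigSet e (1 : F)
      rw [hz]
      exact zmem 1
  have L0kill1 : ∀ w : List A, w ≠ [] → (∀ t ∈ w, t ∈ eigSet e (0 : F)) →
      ∀ x ∈ eigSet e (1 : F), Lmul w x = 0 := by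
    intro w hne hw x hx
    obtain ⟨t, w', rfl⟩ := List.exists_cons_of_ne_nil hne
    have hmem := L0mem1 w' (fun s hs => hw s (by simp [hs])) x hx
    show t * Lmul w' x = 0
    rw [mul_comm]
    exact h.f10 _ hmem t (hw t (by simp))
  -- powers of e
  have Lrep1 : ∀ (k : ℕ) (x : A), x ∈ eigSet e (1 : F) → Lmul (List.replicate k e) x = x := by
    intro k x hx
    have hx' : e * x = x := by rw [show e * x = (1 : F) • x from hx, one_smul]
    induction k with
    | zero => rfl
    | succ n ih => rw [List.replicate_succ, jaux_lmul_cons, ih, hx']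
  have Lrep0 : ∀ (k : ℕ) (x : A), x ∈ eigSet e (0 : F) →
      Lmul (List.replicate (k + 1) e) x = 0 := by
    intro k x hx
    have hx' : e * x = 0 := by rw [show e * x = (0 : F) • x from hx, zero_smul]
    rw [List.replicate_succ', jaux_lmul_append, hx', jaux_lmul_zero]
  have Lrepα : ∀ (k : ℕ) (x : A), x ∈ eigSet e α →
      Lmul (List.replicate k e) x = (α ^ k : F) • x := by
    intro k x hx
    have hx' : e * x = α • x := hx
    induction k with
    | zero => simp [jaux_lmul_nil]
    | succ n ih =>
      rw [List.replicate_succ, jaux_lmul_cons, ih, mul_smul_comm, hx', smul_smul, ← pow_succ]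
  -- iterated Martindale conditions
  have iter0 : ∀ (k : ℕ) (x : A), x ∈ eigSet e (0 : F) →
      (∀ w : List A, w.length = k → (∀ t ∈ w, t ∈ eigSet e (0 : F)) → Lmul w x = 0) →
      x = 0 := by
    intro k
    induction k with
    | zero =>
      intro x _ H
      exact H [] rfl (by simp)
    | succ n ih =>
      intro x hx H
      refine ih x hx ?_
      intro w hwl hw0
      refine hm.2.2.1 _ (L0mem0 w hw0 x hx) ?_
      intro t ht
      refine H (t :: w) (by simp [hwl]) ?_
      intro s hs
      rcases List.mem_cons.mp hs with hs | hs
      · rw [hs]; exact ht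
      · exact hw0 s hs
  have iterα : ∀ (k : ℕ) (x : A), x ∈ eigSet e α →
      (∀ w : List A, w.length = k → (∀ t ∈ w, t ∈ eigSet e (0 : F)) → Lmul w x = 0) →
      x = 0 := by
    intro k
    induction k with
    | zero =>
      intro x _ H
      exact H [] rfl (by simp)
    | succ n ih =>
      intro x hx H
      refine ih x hx ?_
      intro w hwl hw0
      refine hm.2.2.2 _ (L0memα w hw0 x hx) ?_
      intro t ht
      refine H (t :: w) (by simp [hwl]) ?_
      intro s hs
      rcases List.mem_cons.mp hs with hs | hs
      · rw [hs]; exact ht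
      · exact hw0 s hs
  -- elementary facts about f
  have fpair0 : ∀ x : A, f [x, (0 : A)] = 0 := by
    intro x
    have h4 := hIV [x] (by simp)
    simpa using h4.trans (hIII x)
  have f0pair : ∀ x : A, f [(0 : A), x] = 0 := by
    intro x
    rw [hI _ _ (List.Perm.swap x 0 [])]
    exact fpair0 x
  have ftriple0 : ∀ x y : A, f [x, (0 : A), y] = f [x, y] := by
    intro x y
    rw [hI _ _ (List.Perm.cons x (List.Perm.swap y 0 []))]
    simpa using hIV [x, y] (by simp)
  have fexpand : ∀ b v1 v0 : A, f [v1, v0] = 0 → f [b, v1 + v0] = f [b, v1, v0] := by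
    intro b v1 v0 hv
    have h5 := (hII [b] [v1, v0] (by simp) (by simp)).mpr hv
    simpa using h5
  -- Step 1 : f vanishes on (A1, A0) pairs
  have P10 : ∀ x1 ∈ eigSet e (1 : F), ∀ x0 ∈ eigSet e (0 : F), f [x1, x0] = 0 := by
    intro x1 hx1 x0 hx0
    obtain ⟨d1, hd1, d0, hd0, dα, hdα, hsum⟩ := h.decomp (f [x1, x0])
    have hVe := hV (List.replicate (m + 1) e) (by simp) [x1, x0]
    rw [List.map_cons, List.map_cons, List.map_nil, Lrep1 _ _ hx1, Lrep0 _ _ hx0,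
      fpair0 x1, hsum, jaux_lmul_add, jaux_lmul_add, Lrep1 _ _ hd1, Lrep0 _ _ hd0,
      Lrepα _ _ hdα] at hVe
    obtain ⟨h1z, _, haz⟩ := indep d1 hd1 0 (zmem 0) _ (smulmem α _ dα hdα) hVe
    have hdαz : dα = 0 := smul_cancel _ _ (pow_ne_zero _ h.hα0) haz
    have hd : f [x1, x0] = d0 := by rw [hsum, h1z, hdαz, zero_add, add_zero]
    rw [hd]
    refine iter0 (m + 1) d0 hd0 ?_
    intro w hwl hw0
    rw [← hd]
    have hVw := hV w hwl [x1, x0]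
    rw [List.map_cons, List.map_cons, List.map_nil,
      L0kill1 w (by intro hc; simp [hc] at hwl) hw0 x1 hx1, f0pair] at hVw
    exact hVw
  -- Step 2 : f of an (A0, Aα) pair lies in A0
  have Dmem : ∀ x0 ∈ eigSet e (0 : F), ∀ xα ∈ eigSet e α,
      f [x0, xα] ∈ eigSet e (0 : F) := by
    intro x0 hx0 xα hxα
    obtain ⟨d1, hd1, d0, hd0, dα, hdα, hsum⟩ := h.decomp (f [x0, xα])
    have hVe := hV (List.replicate (m + 1) e) (by simp) [x0, xα]
    rw [List.map_cons, List.map_cons, List.map_nil, Lrep0 _ _ hx0, Lrepα _ _ hxα,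
      f0pair, hsum, jaux_lmul_add, jaux_lmul_add, Lrep1 _ _ hd1, Lrep0 _ _ hd0,
      Lrepα _ _ hdα] at hVe
    obtain ⟨h1z, _, haz⟩ := indep d1 hd1 0 (zmem 0) _ (smulmem α _ dα hdα) hVe
    have hdαz : dα = 0 := smul_cancel _ _ (pow_ne_zero _ h.hα0) haz
    rw [hsum, h1z, hdαz, zero_add, add_zero]
    exact hd0
  -- Step 3 : f of an (A1, Aα) pair lies in A1
  have D'mem : ∀ x1 ∈ eigSet e (1 : F), ∀ xα ∈ eigSet e α,
      f [x1, xα] ∈ eigSet e (1 : F) := by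
    intro x1 hx1 xα hxα
    obtain ⟨d1, hd1, d0, hd0, dα, hdα, hsum⟩ := h.decomp (f [x1, xα])
    have hsep : ∀ w : List A, w.length = m + 1 → (∀ t ∈ w, t ∈ eigSet e (0 : F)) →
        Lmul w d0 = 0 ∧ Lmul w dα = 0 := by
      intro w hwl hw0
      have hVw := hV w hwl [x1, xα]
      rw [List.map_cons, List.map_cons, List.map_nil,
        L0kill1 w (by intro hc; simp [hc] at hwl) hw0 x1 hx1, f0pair, hsum,
        jaux_lmul_add, jaux_lmul_add,
        L0kill1 w (by intro hc; simp [hc] at hwl) hw0 d1 hd1, zero_add] at hVw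
      have hi := indep 0 (zmem 1) _ (L0mem0 w hw0 d0 hd0) _ (L0memα w hw0 dα hdα)
        (by rw [zero_add]; exact hVw)
      exact ⟨hi.2.1, hi.2.2⟩
    have hd0z : d0 = 0 := iter0 (m + 1) d0 hd0 (fun w hl hw => (hsep w hl hw).1)
    have hdαz : dα = 0 := iterα (m + 1) dα hdα (fun w hl hw => (hsep w hl hw).2)
    rw [hsum, hd0z, hdαz, add_zero, add_zero]
    exact hd1
  -- Step 4 : a triple value splits as (A1 value) + (A0 element)
  have Tsplit : ∀ u1 ∈ eigSet e (1 : F), ∀ u0 ∈ eigSet e (0 : F), ∀ uα ∈ eigSet e α,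
      ∃ p0 ∈ eigSet e (0 : F),
        f [u1, u0, uα] = f [u1, (α ^ (m + 1) : F) • uα] + p0 := by
    intro u1 hu1 u0 hu0 uα huα
    obtain ⟨c1, hc1, c0, hc0, cα, hcα, hsum⟩ := h.decomp (f [u1, u0, uα])
    have hVe := hV (List.replicate (m + 1) e) (by simp) [u1, u0, uα]
    rw [List.map_cons, List.map_cons, List.map_cons, List.map_nil, Lrep1 _ _ hu1,
      Lrep0 _ _ hu0, Lrepα _ _ huα, ftriple0, hsum, jaux_lmul_add, jaux_lmul_add,
      Lrep1 _ _ hc1, Lrep0 _ _ hc0, Lrepα _ _ hcα] at hVe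
    have hd'mem : f [u1, (α ^ (m + 1) : F) • uα] ∈ eigSet e (1 : F) :=
      D'mem u1 hu1 _ (smulmem α _ uα huα)
    have heq : (c1 - f [u1, (α ^ (m + 1) : F) • uα]) + 0 + (α ^ (m + 1) : F) • cα = 0 := by
      have hz : c1 + 0 + (α ^ (m + 1) : F) • cα - f [u1, (α ^ (m + 1) : F) • uα] = 0 :=
        sub_eq_zero.mpr hVe
      calc (c1 - f [u1, (α ^ (m + 1) : F) • uα]) + 0 + (α ^ (m + 1) : F) • cα
          = c1 + 0 + (α ^ (m + 1) : F) • cα - f [u1, (α ^ (m + 1) : F) • uα] := by abel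
        _ = 0 := hz
    obtain ⟨h1z, _, haz⟩ := indep _ (submem 1 c1 _ hc1 hd'mem) 0 (zmem 0) _
      (smulmem α _ cα hcα) heq
    have hcαz : cα = 0 := smul_cancel _ _ (pow_ne_zero _ h.hα0) haz
    have hc1d : c1 = f [u1, (α ^ (m + 1) : F) • uα] := sub_eq_zero.mp h1z
    exact ⟨c0, hc0, by rw [hsum, hcαz, add_zero, hc1d]⟩
  -- key vanishing lemma: an Aα element equal to f [bα, z1 + z0] is zero
  have key : ∀ bα ∈ eigSet e α, ∀ z1 ∈ eigSet e (1 : F), ∀ z0 ∈ eigSet e (0 : F),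
      ∀ L ∈ eigSet e α, L = f [bα, z1 + z0] → L = 0 := by
    intro bα hbα z1 hz1 z0 hz0 L hL heq
    have hexp : f [bα, z1 + z0] = f [z1, z0, bα] := by
      rw [fexpand bα z1 z0 (P10 z1 hz1 z0 hz0)]
      exact hI _ _ (jaux_rot3 bα z1 z0)
    obtain ⟨p0, hp0, hT⟩ := Tsplit z1 hz1 z0 hz0 bα hbα
    have hp1 : f [z1, (α ^ (m + 1) : F) • bα] ∈ eigSet e (1 : F) :=
      D'mem z1 hz1 _ (smulmem α _ bα hbα)
    have hzero : f [z1, (α ^ (m + 1) : F) • bα] + p0 + (-L) = 0 := by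
      rw [← hT, ← hexp, ← heq]
      abel
    obtain ⟨_, _, hLz⟩ := indep _ hp1 p0 hp0 _ (negmem α L hL) hzero
    simpa using hLz
  -- Step 5 : f vanishes on (A0, Aα) pairs
  have Dzero : ∀ x0 ∈ eigSet e (0 : F), ∀ xα ∈ eigSet e α, f [x0, xα] = 0 := by
    intro x0 hx0 xα hxα
    have hdmem := Dmem x0 hx0 xα hxα
    refine hm.2.1 _ hdmem ?_
    intro tα htα
    have htd : tα * f [x0, xα] ∈ eigSet e α := by
      rw [mul_comm]
      exact h.f0a _ hdmem tα htα
    refine iterα m _ htd ?_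
    intro w hwl hw0
    have hVw := hV (w ++ [tα]) (by simp [hwl]) [x0, xα]
    rw [List.map_cons, List.map_cons, List.map_nil, jaux_lmul_append, jaux_lmul_append,
      jaux_lmul_append] at hVw
    obtain ⟨z1, hz1, z0, hz0, hzz⟩ := h.faa tα htα xα hxα
    have hbα : Lmul w (tα * x0) ∈ eigSet e α := by
      refine L0memα w hw0 _ ?_
      rw [mul_comm]
      exact h.f0a x0 hx0 tα htα
    rw [show Lmul w (tα * xα) = Lmul w z1 + Lmul w z0 from by rw [hzz, jaux_lmul_add]] at hVw
    exact key _ hbα _ (L0mem1 w hw0 z1 hz1) _ (L0mem0 w hw0 z0 hz0) _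
      (L0memα w hw0 _ htd) hVw
  -- Step 6 : f vanishes on (A1, Aα) pairs
  have D'zero : ∀ x1 ∈ eigSet e (1 : F), ∀ xα ∈ eigSet e α, f [x1, xα] = 0 := by
    intro x1 hx1 xα hxα
    have hdmem := D'mem x1 hx1 xα hxα
    refine hm.1 _ hdmem ?_
    intro tα htα
    have htd : tα * f [x1, xα] ∈ eigSet e α := by
      rw [mul_comm]
      exact h.f1a _ hdmem tα htα
    refine iterα m _ htd ?_
    intro w hwl hw0
    have hVw := hV (w ++ [tα]) (by simp [hwl]) [x1, xα]
    rw [List.map_cons, List.map_cons, List.map_nil, jaux_lmul_append, jaux_lmul_append,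
      jaux_lmul_append] at hVw
    obtain ⟨z1, hz1, z0, hz0, hzz⟩ := h.faa tα htα xα hxα
    have hbα : Lmul w (tα * x1) ∈ eigSet e α := by
      refine L0memα w hw0 _ ?_
      rw [mul_comm]
      exact h.f1a x1 hx1 tα htα
    rw [show Lmul w (tα * xα) = Lmul w z1 + Lmul w z0 from by rw [hzz, jaux_lmul_add]] at hVw
    exact key _ hbα _ (L0mem1 w hw0 z1 hz1) _ (L0mem0 w hw0 z0 hz0) _
      (L0memα w hw0 _ htd) hVw
  -- final assembly
  obtain ⟨p0, hp0, hceq⟩ := Tsplit a1 h1 a0 h0 aα ha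
  rw [D'zero a1 h1 _ (smulmem α _ aα ha), zero_add] at hceq
  rw [hceq]
  refine iter0 (m + 1) p0 hp0 ?_
  intro w hwl hw0
  rw [← hceq]
  have hVw := hV w hwl [a1, a0, aα]
  rw [List.map_cons, List.map_cons, List.map_cons, List.map_nil,
    L0kill1 w (by intro hc; simp [hc] at hwl) hw0 a1 h1] at hVw
  rw [hVw, hI _ _ (jaux_rot3 0 (Lmul w a0) (Lmul w aα))]
  have htr := hIV [Lmul w a0, Lmul w aα] (by simp)
  rw [show ([Lmul w a0, Lmul w aα] ++ [(0 : A)]) = [Lmul w a0, Lmul w aα, (0 : A)] from rfl]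
    at htr
  rw [htr]
  exact Dzero _ (L0mem0 w hw0 a0 h0) _ (L0memα w hw0 aα ha)
end

section
/- Let (A,e) be a J(α)-algebra (α ≠ 0,1) satisfying the Martindale-like conditions (i)–(iii). Then every nullifying function on A is identically zero. -/
set_option linter.unusedSectionVars false

namespace JNF

/-! ### Basic lemmas about `Lmul` -/

theorem Lmul_nil {A : Type*} [Mul A] (x : A) : Lmul ([] : List A) x = x := rfl

theorem Lmul_cons {A : Type*} [Mul A] (t : A) (ts : List A) (x : A) :
    Lmul (t :: ts) x = t * Lmul ts x := rfl

theorem Lmul_append {A : Type*} [Mul A] (ts us : List A) (x : A) :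
    Lmul (ts ++ us) x = Lmul ts (Lmul us x) := by
  simp [Lmul, List.foldr_append]

theorem Lmul_zero {A : Type*} [MulZeroClass A] (ts : List A) : Lmul ts (0 : A) = 0 := by
  induction ts with
  | nil => rfl
  | cons t ts ih => rw [Lmul_cons, ih, mul_zero]

section Algebra

variable {F A : Type*} [Field F] [NonUnitalNonAssocCommRing A] [Module F A]
  [SMulCommClass F A A] [IsScalarTower F A A] {e : A} {α : F}

theorem smul_cancel {c : F} (hc : c ≠ 0) {x : A} (hx : c • x = 0) : x = 0 := by
  have h2 := congrArg (fun y => c⁻¹ • y) hx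
  simpa [smul_smul, inv_mul_cancel₀ hc] using h2

/-! ### Eigenspace membership lemmas -/

theorem mem0_iff {x : A} : x ∈ eigSet e (0 : F) ↔ e * x = 0 := by
  simp [eigSet]

theorem mem1_iff {x : A} : x ∈ eigSet e (1 : F) ↔ e * x = x := by
  simp [eigSet]

theorem mema_eq {x : A} (hx : x ∈ eigSet e α) : e * x = α • x := hx

theorem mem_add {lam : F} {x y : A} (hx : x ∈ eigSet e lam) (hy : y ∈ eigSet e lam) :
    x + y ∈ eigSet e lam := by
  simp only [eigSet, Set.mem_setOf_eq] at *
  rw [mul_add, hx, hy, smul_add]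

theorem mem_smul {lam : F} (c : F) {x : A} (hx : x ∈ eigSet e lam) :
    c • x ∈ eigSet e lam := by
  simp only [eigSet, Set.mem_setOf_eq] at *
  rw [mul_smul_comm, hx, smul_smul, smul_smul, mul_comm]

theorem mem_zero {lam : F} : (0 : A) ∈ eigSet e lam := by
  simp [eigSet]

theorem mem_neg {lam : F} {x : A} (hx : x ∈ eigSet e lam) : -x ∈ eigSet e lam := by
  simp only [eigSet, Set.mem_setOf_eq] at *
  rw [mul_neg, hx, smul_neg]

variable (h : IsJAlg e α)
include h

theorem he1 : e ∈ eigSet e (1 : F) := mem1_iff.mpr h.idem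

/-- products, commuted versions -/
theorem p01 {u a : A} (hu : u ∈ eigSet e (0 : F)) (ha : a ∈ eigSet e (1 : F)) :
    u * a = 0 := by rw [mul_comm]; exact h.f10 a ha u hu

theorem pa1 {x a : A} (hx : x ∈ eigSet e α) (ha : a ∈ eigSet e (1 : F)) :
    x * a ∈ eigSet e α := by rw [mul_comm]; exact h.f1a a ha x hx

theorem pa0 {x u : A} (hx : x ∈ eigSet e α) (hu : u ∈ eigSet e (0 : F)) :
    x * u ∈ eigSet e α := by rw [mul_comm]; exact h.f0a u hu x hx

/-- Uniqueness for `A₀ ⊕ A_α` pairs. -/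
theorem pair0a {w0 wa : A} (h0 : w0 ∈ eigSet e (0 : F)) (ha : wa ∈ eigSet e α)
    (hsum : w0 + wa = 0) : w0 = 0 ∧ wa = 0 := by
  have h1 : e * (w0 + wa) = 0 := by rw [hsum, mul_zero]
  rw [mul_add, mem0_iff.mp h0, mema_eq ha, zero_add] at h1
  have hwa : wa = 0 := smul_cancel h.hα0 h1
  refine ⟨?_, hwa⟩
  rwa [hwa, add_zero] at hsum

/-- `Lmul` of a list of `e`'s on an element of `A₁`. -/
theorem lmul_rep_1 (k : ℕ) {x : A} (hx : x ∈ eigSet e (1 : F)) :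
    Lmul (List.replicate k e) x = x := by
  induction k with
  | zero => rfl
  | succ k ih => rw [List.replicate_succ, Lmul_cons, ih, mem1_iff.mp hx]

/-- `Lmul` of a list of `e`'s on an element of `A_α`. -/
theorem lmul_rep_a (k : ℕ) {x : A} (hx : x ∈ eigSet e α) :
    Lmul (List.replicate k e) x = α ^ k • x := by
  induction k with
  | zero => rw [List.replicate_zero, Lmul_nil, pow_zero, one_smul]
  | succ k ih =>
      rw [List.replicate_succ, Lmul_cons, ih, mul_smul_comm, mema_eq hx, smul_smul,
        pow_succ, mul_comm]

/-- `Lmul` of a nonempty list of `e`'s on `p1 + p0` with `p1 ∈ A₁`, `p0 ∈ A₀`. -/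
theorem lmul_rep_10 (k : ℕ) {p1 p0 : A} (h1 : p1 ∈ eigSet e (1 : F))
    (h0 : p0 ∈ eigSet e (0 : F)) :
    Lmul (List.replicate (k + 1) e) (p1 + p0) = p1 := by
  induction k with
  | zero =>
      show e * (p1 + p0) = p1
      rw [mul_add, mem1_iff.mp h1, mem0_iff.mp h0, add_zero]
  | succ k ih =>
      rw [List.replicate_succ, Lmul_cons, ih, mem1_iff.mp h1]

/-- `Lmul` along a list of `A₀`-elements keeps `A₀`. -/
theorem lmul_chain_00 : ∀ (c : List A), (∀ y ∈ c, y ∈ eigSet e (0 : F)) →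
    ∀ {x : A}, x ∈ eigSet e (0 : F) → Lmul c x ∈ eigSet e (0 : F) := by
  intro c
  induction c with
  | nil => intro _ x hx; exact hx
  | cons t c ih =>
      intro hc x hx
      rw [Lmul_cons]
      exact h.f00 t (hc t (by simp)) _ (ih (fun y hy => hc y (by simp [hy])) hx)

/-- `Lmul` along a nonempty list of `A₀`-elements sends `p1 + p0` into `A₀`. -/
theorem lmul_chain_10 : ∀ (c : List A), c ≠ [] → (∀ y ∈ c, y ∈ eigSet e (0 : F)) →
    ∀ {p1 p0 : A}, p1 ∈ eigSet e (1 : F) → p0 ∈ eigSet e (0 : F) →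
    Lmul c (p1 + p0) ∈ eigSet e (0 : F) := by
  intro c
  induction c with
  | nil => intro hne; exact absurd rfl hne
  | cons t c ih =>
      intro _ hc p1 p0 h1 h0
      rw [Lmul_cons]
      rcases c with _ | ⟨s, c'⟩
      · have : Lmul ([] : List A) (p1 + p0) = p1 + p0 := rfl
        rw [this, mul_add, p01 h (hc t (by simp)) h1, zero_add]
        exact h.f00 t (hc t (by simp)) _ h0
      · exact h.f00 t (hc t (by simp)) _
          (ih (by simp) (fun y hy => hc y (by simp [hy])) h1 h0)

end Algebra

section FLayer

variable {F A : Type*} [Field F] [NonUnitalNonAssocCommRing A] [Module F A]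
  [SMulCommClass F A A] [IsScalarTower F A A] {e : A} {α : F}
  {f : List A → A} {r : ℕ}

/-! ### Basic consequences of the nullifying axioms -/

theorem fperm (hf : IsNullifying f r) {l l' : List A} (hp : l.Perm l') : f l = f l' :=
  hf.2.1 l l' hp

theorem fsingle (hf : IsNullifying f r) (x : A) : f [x] = 0 := hf.2.2.2.1 x

theorem fpair_swap (hf : IsNullifying f r) (a b : A) : f [a, b] = f [b, a] :=
  fperm hf (List.Perm.swap b a [])

theorem fpair0 (hf : IsNullifying f r) (y : A) : f [y, 0] = 0 := by
  have h1 := hf.2.2.2.2.1 [y] (by simp)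
  have h2 : ([y] ++ [(0 : A)]) = [y, 0] := rfl
  rw [h2] at h1
  rw [h1, fsingle hf]

theorem map_lmul_nil (l : List A) : l.map (Lmul ([] : List A)) = l := by
  induction l with
  | nil => rfl
  | cons a l ih => rw [List.map_cons, ih]; rfl

/-- Iterated transport: axiom (V) for lists of length a multiple of `r`. -/
theorem transport (hf : IsNullifying f r) :
    ∀ (k : ℕ) (ts : List A), ts.length = k * r → ∀ l, Lmul ts (f l) = f (l.map (Lmul ts)) := by
  intro k
  induction k with
  | zero =>
      intro ts hts l
      rw [zero_mul, List.length_eq_zero_iff] at hts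
      subst hts
      rw [map_lmul_nil]
      rfl
  | succ k ih =>
      intro ts hts l
      have hrle : r ≤ ts.length := by
        rw [hts, Nat.succ_mul]; omega
      have h1 : (ts.take r).length = r := by rw [List.length_take]; omega
      have h2 : (ts.drop r).length = k * r := by
        rw [List.length_drop, hts, Nat.succ_mul]; omega
      have hsplit : ts = ts.take r ++ ts.drop r := (List.take_append_drop r ts).symm
      have hfun : ∀ x : A, Lmul ts x = Lmul (ts.take r) (Lmul (ts.drop r) x) := by
        intro x; conv_lhs => rw [hsplit]
        rw [Lmul_append]
      calc Lmul ts (f l) = Lmul (ts.take r) (Lmul (ts.drop r) (f l)) := hfun _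
        _ = Lmul (ts.take r) (f (l.map (Lmul (ts.drop r)))) := by rw [ih _ h2 l]
        _ = f ((l.map (Lmul (ts.drop r))).map (Lmul (ts.take r))) :=
            hf.2.2.2.2.2 _ h1 _
        _ = f (l.map (Lmul ts)) := by
            rw [List.map_map]
            congr 1
            exact List.map_congr_left (fun x _ => (hfun x).symm)

variable (h : IsJAlg e α) (hm : MartindaleJ e α)
include h hm

/-- If `z` is annihilated by every left multiplication, `z = 0`. -/
theorem killOne {z : A} (hz : ∀ t : A, t * z = 0) : z = 0 := by
  obtain ⟨z1, h1, z0, h0, za, ha, rfl⟩ := h.decomp z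
  have hsplit : ∀ u ∈ eigSet e (0 : F), u * z0 = 0 ∧ u * za = 0 := by
    intro u hu
    have hz' := hz u
    rw [mul_add, mul_add, p01 h hu h1, zero_add] at hz'
    exact pair0a h (h.f00 u hu z0 h0) (h.f0a u hu za ha) hz'
  have hz0 : z0 = 0 := hm.2.2.1 z0 h0 (fun u hu => (hsplit u hu).1)
  have hza : za = 0 := hm.2.2.2 za ha (fun u hu => (hsplit u hu).2)
  have hz1 : z1 = 0 := by
    apply hm.1 z1 h1
    intro t _
    have := hz t
    rwa [hz0, hza, add_zero, add_zero] at this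
  rw [hz0, hza, hz1, add_zero, add_zero]

/-- If `z` is annihilated by all `k`-fold products of left multiplications, `z = 0`. -/
theorem killAll : ∀ (k : ℕ), 0 < k → ∀ z : A,
    (∀ vs : List A, vs.length = k → Lmul vs z = 0) → z = 0 := by
  intro k
  induction k with
  | zero => intro hk; exact absurd hk (lt_irrefl 0)
  | succ k ih =>
      intro _ z hz
      rcases Nat.eq_zero_or_pos k with hk | hk
      · subst hk
        apply killOne h hm
        intro t
        exact hz [t] rfl
      · apply killOne h hm
        intro t
        apply ih hk
        intro vs hvs
        have := hz (vs ++ [t]) (by simp [hvs])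
        rwa [Lmul_append] at this

/-- If `z` is annihilated by all `k`-fold products of `A₀`-multiplications, then
`A₀ * z = 0`. -/
theorem killA0 : ∀ (k : ℕ), 0 < k → ∀ z : A,
    (∀ c : List A, c.length = k → (∀ y ∈ c, y ∈ eigSet e (0 : F)) → Lmul c z = 0) →
    ∀ u ∈ eigSet e (0 : F), u * z = 0 := by
  intro k
  induction k with
  | zero => intro hk; exact absurd hk (lt_irrefl 0)
  | succ k ih =>
      intro _ z hz u hu
      rcases Nat.eq_zero_or_pos k with hk | hk
      · subst hk
        exact hz [u] rfl (by simpa using hu)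
      · have hmain : ∀ u' ∈ eigSet e (0 : F), u' * (u * z) = 0 := by
          apply ih hk (u * z)
          intro c hc hcm
          have := hz (c ++ [u]) (by simp [hc])
            (by
              intro y hy
              rcases List.mem_append.mp hy with hy | hy
              · exact hcm y hy
              · simp at hy; subst hy; exact hu)
          rwa [Lmul_append] at this
        obtain ⟨z1, h1, z0, h0, za, ha, rfl⟩ := h.decomp z
        have hz1 : u * z1 = 0 := p01 h hu h1
        have hu0 : u * z0 ∈ eigSet e (0 : F) := h.f00 u hu z0 h0
        have hua : u * za ∈ eigSet e α := h.f0a u hu za ha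
        have hinner : u * (z1 + z0 + za) = u * z0 + u * za := by
          rw [mul_add, mul_add, hz1, zero_add]
        have hsplit : ∀ u' ∈ eigSet e (0 : F), u' * (u * z0) = 0 ∧ u' * (u * za) = 0 := by
          intro u' hu'
          have hthis := hmain u' hu'
          rw [hinner, mul_add] at hthis
          exact pair0a h (h.f00 u' hu' _ hu0) (h.f0a u' hu' _ hua) hthis
        have e0 : u * z0 = 0 := hm.2.2.1 _ hu0 (fun u' hu' => (hsplit u' hu').1)
        have ea : u * za = 0 := hm.2.2.2 _ hua (fun u' hu' => (hsplit u' hu').2)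
        rw [hinner, e0, ea, add_zero]

variable (hf : IsNullifying f r)
include hf

/-- Key "factored annihilator" lemma: any composite of left multiplications that
kills one argument of a pair kills the value of `f` on that pair. -/
theorem killPair (z x : A) (tail : List A) (hx : Lmul tail x = 0) :
    Lmul tail (f [z, x]) = 0 := by
  have hr : 0 < r := hf.1
  set n := tail.length with hn
  have hle : n + 1 ≤ (n + 1) * r := Nat.le_mul_of_pos_right _ hr
  set K := (n + 1) * r - n with hK
  have hKpos : 0 < K := by omega
  apply killAll h hm K hKpos
  intro vs hvs
  rw [← Lmul_append]
  have hlen : (vs ++ tail).length = (n + 1) * r := by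
    simp only [List.length_append, hvs, ← hn]; omega
  rw [transport hf (n + 1) _ hlen]
  have hx0 : Lmul (vs ++ tail) x = 0 := by rw [Lmul_append, hx, Lmul_zero]
  simp only [List.map_cons, List.map_nil, hx0]
  exact fpair0 hf _

end FLayer

section Pairs

variable {F A : Type*} [Field F] [NonUnitalNonAssocCommRing A] [Module F A]
  [SMulCommClass F A A] [IsScalarTower F A A] {e : A} {α : F}
  {f : List A → A} {r : ℕ}
  (h : IsJAlg e α) (hm : MartindaleJ e α) (hf : IsNullifying f r)
include h hm hf

/-- (S1a) If the second argument is in `A₀`, the pair value is in `A₀`. -/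
theorem valA0 {z u : A} (hu : u ∈ eigSet e (0 : F)) : e * f [z, u] = 0 := by
  have hkill : Lmul [e] u = 0 := by
    show e * u = 0
    exact mem0_iff.mp hu
  exact killPair h hm hf z u [e] hkill

/-- (S1b) If the second argument is in `A_α`, the pair value is in `A_α`. -/
theorem valAa {z x : A} (hx : x ∈ eigSet e α) : f [z, x] ∈ eigSet e α := by
  set m := f [z, x] with hmdef
  obtain ⟨m1, h1, m0, h0, ma, hA, heq⟩ := h.decomp m
  -- killer 1 : for u ∈ A₀, t ∈ A_α we get e * (u * (t * m)) = 0
  have killer1 : ∀ u ∈ eigSet e (0 : F), ∀ t ∈ eigSet e α, e * (u * (t * m)) = 0 := by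
    intro u hu t ht
    obtain ⟨c1, hc1, c0, hc0, hca⟩ := h.faa t ht x hx
    have hkill : Lmul [e, u, t] x = 0 := by
      show e * (u * (t * x)) = 0
      rw [hca, mul_add, p01 h hu hc1, zero_add, mem0_iff.mp (h.f00 u hu c0 hc0)]
    exact killPair h hm hf z x [e, u, t] hkill
  -- killer 2 : for u, u' ∈ A₀, t ∈ A_α we get e * (u' * (t * (u * m))) = 0
  have killer2 : ∀ u' ∈ eigSet e (0 : F), ∀ t ∈ eigSet e α, ∀ u ∈ eigSet e (0 : F),
      e * (u' * (t * (u * m))) = 0 := by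
    intro u' hu' t ht u hu
    obtain ⟨d1, hd1, d0, hd0, hda⟩ := h.faa t ht (u * x) (h.f0a u hu x hx)
    have hkill : Lmul [e, u', t, u] x = 0 := by
      show e * (u' * (t * (u * x))) = 0
      rw [hda, mul_add, p01 h hu' hd1, zero_add, mem0_iff.mp (h.f00 u' hu' d0 hd0)]
    exact killPair h hm hf z x [e, u', t, u] hkill
  -- Step A : for all t ∈ A_α, t * (m1 + m0) = 0
  have stepA : ∀ t ∈ eigSet e α, t * (m1 + m0) = 0 := by
    intro t ht
    obtain ⟨c1, hc1, c0, hc0, hca⟩ := h.faa t ht ma hA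
    have hw : t * (m1 + m0) ∈ eigSet e α := by
      rw [mul_add]
      exact mem_add (pa1 h ht h1) (pa0 h ht h0)
    apply hm.2.2.2 _ hw
    intro u hu
    have hk := killer1 u hu t ht
    have hexp : t * m = t * (m1 + m0) + c1 + c0 := by
      rw [heq, mul_add, hca, ← add_assoc]
    have hinner : u * (t * (m1 + m0) + c1 + c0) = u * (t * (m1 + m0)) + u * c0 := by
      rw [mul_add, mul_add, p01 h hu hc1, add_zero]
    rw [hexp, hinner, mul_add] at hk
    have hmemw : u * (t * (m1 + m0)) ∈ eigSet e α := h.f0a u hu _ hw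
    have hmem0 : u * c0 ∈ eigSet e (0 : F) := h.f00 u hu c0 hc0
    rw [mema_eq hmemw, mem0_iff.mp hmem0, add_zero] at hk
    exact smul_cancel h.hα0 hk
  -- Step B : m0 = 0
  have hm0z : m0 = 0 := by
    apply hm.2.2.1 m0 h0
    intro u hu
    apply hm.2.1 _ (h.f00 u hu m0 h0)
    intro t ht
    have hva : t * (u * m0) ∈ eigSet e α := pa0 h ht (h.f00 u hu m0 h0)
    apply hm.2.2.2 _ hva
    intro u' hu'
    have hk := killer2 u' hu' t ht u hu
    obtain ⟨d1, hd1, d0, hd0, hda⟩ := h.faa t ht (u * ma) (h.f0a u hu ma hA)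
    have hum : u * m = u * m0 + u * ma := by
      rw [heq, mul_add, mul_add, p01 h hu h1, zero_add]
    have hexp : t * (u * m) = t * (u * m0) + d1 + d0 := by
      rw [hum, mul_add, hda, ← add_assoc]
    have hinner : u' * (t * (u * m0) + d1 + d0) = u' * (t * (u * m0)) + u' * d0 := by
      rw [mul_add, mul_add, p01 h hu' hd1, add_zero]
    rw [hexp, hinner, mul_add] at hk
    have hmemw : u' * (t * (u * m0)) ∈ eigSet e α := h.f0a u' hu' _ hva
    have hmem0 : u' * d0 ∈ eigSet e (0 : F) := h.f00 u' hu' d0 hd0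
    rw [mema_eq hmemw, mem0_iff.mp hmem0, add_zero] at hk
    exact smul_cancel h.hα0 hk
  -- Step C : m1 = 0
  have hm1z : m1 = 0 := by
    apply hm.1 m1 h1
    intro t ht
    have := stepA t ht
    rwa [hm0z, add_zero] at this
  show m ∈ eigSet e α
  rw [heq, hm0z, hm1z, zero_add, zero_add]
  exact hA

/-- Cross vanishing: `f [ρ₁ + ρ₀, x] = 0` for `ρ₁ ∈ A₁`, `ρ₀ ∈ A₀`, `x ∈ A_α`. -/
theorem cross10a {ρ1 ρ0 x : A} (h1 : ρ1 ∈ eigSet e (1 : F)) (h0 : ρ0 ∈ eigSet e (0 : F))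
    (hx : x ∈ eigSet e α) : f [ρ1 + ρ0, x] = 0 := by
  have hmem : f [ρ1 + ρ0, x] ∈ eigSet e α := valAa h hm hf hx
  apply hm.2.2.2 _ hmem
  intro u hu
  have hkill : Lmul [e, u] (ρ1 + ρ0) = 0 := by
    show e * (u * (ρ1 + ρ0)) = 0
    rw [mul_add, p01 h hu h1, zero_add, mem0_iff.mp (h.f00 u hu ρ0 h0)]
  have hk := killPair h hm hf x (ρ1 + ρ0) [e, u] hkill
  rw [show f [x, ρ1 + ρ0] = f [ρ1 + ρ0, x] from fpair_swap hf _ _] at hk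
  have hk' : e * (u * f [ρ1 + ρ0, x]) = 0 := hk
  have hmemu : u * f [ρ1 + ρ0, x] ∈ eigSet e α := h.f0a u hu _ hmem
  rw [mema_eq hmemu] at hk'
  exact smul_cancel h.hα0 hk'

/-- Cross vanishing: `f [a, u] = 0` for `a ∈ A₁`, `u ∈ A₀`. -/
theorem cross10 {a u : A} (ha : a ∈ eigSet e (1 : F)) (hu : u ∈ eigSet e (0 : F)) :
    f [a, u] = 0 := by
  have hm0 : f [a, u] ∈ eigSet e (0 : F) := mem0_iff.mpr (valA0 h hm hf hu)
  apply hm.2.2.1 _ hm0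
  intro u' hu'
  have hkill : Lmul [u'] a = 0 := p01 h hu' ha
  have hk := killPair h hm hf u a [u'] hkill
  rwa [show f [u, a] = f [a, u] from fpair_swap hf _ _] at hk

end Pairs

section Endgame

variable {F A : Type*} [Field F] [NonUnitalNonAssocCommRing A] [Module F A]
  [SMulCommClass F A A] [IsScalarTower F A A] {e : A} {α : F}
  {f : List A → A} {r : ℕ}
  (h : IsJAlg e α) (hm : MartindaleJ e α) (hf : IsNullifying f r)
include h hm hf

/-- Key step (E2): values `f [α•w, α^(2r-1)•(u*x)]` vanish for `w, x ∈ A_α`, `u ∈ A₀`. -/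
theorem keyE2 {w x u : A} (hw : w ∈ eigSet e α) (hx : x ∈ eigSet e α)
    (hu : u ∈ eigSet e (0 : F)) :
    f [α • w, α ^ (2 * r - 1) • (u * x)] = 0 := by
  have hr : 0 < r := hf.1
  have hseed : f [e, x] = 0 := by
    have h2 := cross10a h hm hf (he1 h) (mem_zero (e := e) (lam := (0 : F))) hx
    rwa [add_zero] at h2
  set k := 2 * r - 1 with hkdef
  set ts : List A := (u + w) :: List.replicate k e with hts
  have hlen : ts.length = 2 * r := by
    simp only [hts, List.length_cons, List.length_replicate, hkdef]; omega
  have htr := transport hf 2 ts hlen [e, x]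
  have hTe : Lmul ts e = α • w := by
    show (u + w) * Lmul (List.replicate k e) e = α • w
    rw [lmul_rep_1 h k (he1 h), add_mul, p01 h hu (he1 h), zero_add, mul_comm w e,
      mema_eq hw]
  have hTx : Lmul ts x = α ^ k • (u * x) + α ^ k • (w * x) := by
    show (u + w) * Lmul (List.replicate k e) x = _
    rw [lmul_rep_a h k hx, mul_smul_comm, add_mul, smul_add]
  rw [hseed, Lmul_zero] at htr
  simp only [List.map_cons, List.map_nil] at htr
  rw [hTe, hTx] at htr
  obtain ⟨c1, hc1, c0, hc0, hwx⟩ := h.faa w hw x hx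
  have hq : α ^ k • (w * x) = α ^ k • c1 + α ^ k • c0 := by rw [hwx, smul_add]
  have hq1 : α ^ k • c1 ∈ eigSet e (1 : F) := mem_smul _ hc1
  have hq0 : α ^ k • c0 ∈ eigSet e (0 : F) := mem_smul _ hc0
  have hv' : α ^ k • (u * x) ∈ eigSet e α := mem_smul _ (h.f0a u hu x hx)
  rw [hq] at htr
  -- htr : 0 = f [α•w, α^k•(u*x) + (α^k•c1 + α^k•c0)]
  have hft : f [α ^ k • c1 + α ^ k • c0, α ^ k • (u * x)] = 0 :=
    cross10a h hm hf hq1 hq0 hv'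
  have hsum1 : ([α ^ k • c1 + α ^ k • c0, α ^ k • (u * x)] : List A).sum
      = α ^ k • (u * x) + (α ^ k • c1 + α ^ k • c0) := by
    simp [add_comm]
  have hcol := (hf.2.2.1 [α • w] [α ^ k • c1 + α ^ k • c0, α ^ k • (u * x)]
    (by simp) (by simp)).mpr hft
  rw [hsum1] at hcol
  simp only [List.cons_append, List.nil_append] at hcol
  -- hcol : f [α•w, α^k•(u*x) + (α^k•c1 + α^k•c0)] = f [α•w, α^k•c1 + α^k•c0, α^k•(u*x)]
  have h3 : f [α • w, α ^ k • c1 + α ^ k • c0, α ^ k • (u * x)] = 0 := by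
    rw [← hcol]; exact htr.symm
  have hLHS : f [α ^ k • c1 + α ^ k • c0, α • w + α ^ k • (u * x)] = 0 :=
    cross10a h hm hf hq1 hq0 (mem_add (mem_smul _ hw) hv')
  have hperm : f [α ^ k • c1 + α ^ k • c0, α • w, α ^ k • (u * x)]
      = f [α • w, α ^ k • c1 + α ^ k • c0, α ^ k • (u * x)] :=
    fperm hf (List.Perm.swap _ _ _)
  have hEq : f ([α ^ k • c1 + α ^ k • c0] ++ [([α • w, α ^ k • (u * x)] : List A).sum])
      = f ([α ^ k • c1 + α ^ k • c0] ++ [α • w, α ^ k • (u * x)]) := by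
    have hsum2 : ([α • w, α ^ k • (u * x)] : List A).sum = α • w + α ^ k • (u * x) := by
      simp
    rw [hsum2]
    simp only [List.cons_append, List.nil_append]
    rw [hLHS, hperm, h3]
  exact (hf.2.2.1 [α ^ k • c1 + α ^ k • c0] [α • w, α ^ k • (u * x)]
    (by simp) (by simp)).mp hEq

/-- (E3) `f` vanishes on pairs from `A_α`. -/
theorem gAA {v y : A} (hv : v ∈ eigSet e α) (hy : y ∈ eigSet e α) : f [v, y] = 0 := by
  have hr : 0 < r := hf.1
  have hmem : f [v, y] ∈ eigSet e α := valAa h hm hf hy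
  apply hm.2.2.2 _ hmem
  intro u hu
  set k := 2 * r - 1 with hkdef
  set ts : List A := u :: List.replicate k e with hts
  have hlen : ts.length = 2 * r := by
    simp only [hts, List.length_cons, List.length_replicate, hkdef]; omega
  have htr := transport hf 2 ts hlen [v, y]
  have hL : Lmul ts (f [v, y]) = α ^ k • (u * f [v, y]) := by
    show u * Lmul (List.replicate k e) (f [v, y]) = _
    rw [lmul_rep_a h k hmem, mul_smul_comm]
  have hTv : Lmul ts v = α ^ k • (u * v) := by
    show u * Lmul (List.replicate k e) v = _
    rw [lmul_rep_a h k hv, mul_smul_comm]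
  have hTy : Lmul ts y = α ^ k • (u * y) := by
    show u * Lmul (List.replicate k e) y = _
    rw [lmul_rep_a h k hy, mul_smul_comm]
  simp only [List.map_cons, List.map_nil] at htr
  rw [hL, hTv, hTy] at htr
  have hexp : α ^ k • (u * v) = α • (α ^ (2 * r - 2) • (u * v)) := by
    have hke : k = (2 * r - 2) + 1 := by omega
    rw [hke, pow_succ', mul_smul]
  have hzero : f [α ^ k • (u * v), α ^ k • (u * y)] = 0 := by
    rw [hexp]
    exact keyE2 h hm hf (mem_smul _ (h.f0a u hu v hv)) hy hu
  rw [hzero] at htr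
  exact smul_cancel (pow_ne_zero _ h.hα0) htr

/-- `f [x, ζ] = 0` for `x ∈ A_α` and arbitrary `ζ`. -/
theorem gA_any {x : A} (hx : x ∈ eigSet e α) (ζ : A) : f [x, ζ] = 0 := by
  obtain ⟨z1, h1, z0, h0, za, ha, rfl⟩ := h.decomp ζ
  have hcol1 := (hf.2.2.1 [x] [z1 + z0, za] (by simp) (by simp)).mpr
    (cross10a h hm hf h1 h0 ha)
  simp only [List.cons_append, List.nil_append, List.sum_cons, List.sum_nil,
    add_zero] at hcol1
  have hcol2 := (hf.2.2.1 [z1 + z0] [x, za] (by simp) (by simp)).mpr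
    (gAA h hm hf hx ha)
  simp only [List.cons_append, List.nil_append, List.sum_cons, List.sum_nil,
    add_zero] at hcol2
  have hperm : f [x, z1 + z0, za] = f [z1 + z0, x, za] :=
    fperm hf (List.Perm.swap _ _ _)
  have hfin : f [z1 + z0, x + za] = 0 := cross10a h hm hf h1 h0 (mem_add hx ha)
  calc f [x, z1 + z0 + za] = f [x, z1 + z0, za] := hcol1
    _ = f [z1 + z0, x, za] := hperm
    _ = f [z1 + z0, x + za] := hcol2.symm
    _ = 0 := hfin

/-- `f [u, p₁ + p₀] = 0` for `u ∈ A₀` and `p₁ ∈ A₁`, `p₀ ∈ A₀`. -/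
theorem g0_10 {u p1 p0 : A} (hu : u ∈ eigSet e (0 : F)) (h1 : p1 ∈ eigSet e (1 : F))
    (h0 : p0 ∈ eigSet e (0 : F)) : f [u, p1 + p0] = 0 := by
  have hr : 0 < r := hf.1
  have hmA0 : e * f [u, p1 + p0] = 0 := by
    rw [fpair_swap hf]
    exact valA0 h hm hf hu
  have hchain : ∀ c : List A, c.length = 2 * r - 1 → (∀ y ∈ c, y ∈ eigSet e (0 : F)) →
      Lmul c (f [u, p1 + p0]) = 0 := by
    intro c hc hcm
    have hcne : c ≠ [] := by
      intro hcnil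
      rw [hcnil] at hc
      simp at hc
      omega
    have hcm0 : Lmul c (f [u, p1 + p0]) ∈ eigSet e (0 : F) :=
      lmul_chain_00 h c hcm (mem0_iff.mpr hmA0)
    apply hm.2.1 _ hcm0
    intro t ht
    have hlen : (t :: c).length = 2 * r := by simp [hc]; omega
    have htr := transport hf 2 (t :: c) hlen [u, p1 + p0]
    simp only [List.map_cons, List.map_nil] at htr
    have hcu : Lmul c u ∈ eigSet e (0 : F) := lmul_chain_00 h c hcm hu
    have hcp : Lmul c (p1 + p0) ∈ eigSet e (0 : F) := lmul_chain_10 h c hcne hcm h1 h0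
    have hz : f [Lmul (t :: c) u, Lmul (t :: c) (p1 + p0)] = 0 := by
      rw [Lmul_cons, Lmul_cons]
      exact gAA h hm hf (pa0 h ht hcu) (pa0 h ht hcp)
    rw [hz] at htr
    rw [Lmul_cons] at htr
    exact htr
  have hall : ∀ u' ∈ eigSet e (0 : F), u' * f [u, p1 + p0] = 0 :=
    killA0 h hm (2 * r - 1) (by omega) _ hchain
  exact hm.2.2.1 _ (mem0_iff.mpr hmA0) hall

/-- `f [a, p₁ + p₀] = 0` for `a ∈ A₁` and `p₁ ∈ A₁`, `p₀ ∈ A₀`. -/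
theorem g1_10 {a p1 p0 : A} (ha : a ∈ eigSet e (1 : F)) (h1 : p1 ∈ eigSet e (1 : F))
    (h0 : p0 ∈ eigSet e (0 : F)) : f [a, p1 + p0] = 0 := by
  have hr : 0 < r := hf.1
  have hu0 : ∀ u ∈ eigSet e (0 : F), u * f [a, p1 + p0] = 0 := by
    intro u hu
    have hkill : Lmul [u] a = 0 := p01 h hu ha
    have hk := killPair h hm hf (p1 + p0) a [u] hkill
    rwa [show f [p1 + p0, a] = f [a, p1 + p0] from fpair_swap hf _ _] at hk
  obtain ⟨m1, hm1, m0, hm0, ma, hma, heq⟩ := h.decomp (f [a, p1 + p0])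
  have hsplit : ∀ u ∈ eigSet e (0 : F), u * m0 = 0 ∧ u * ma = 0 := by
    intro u hu
    have hthis := hu0 u hu
    rw [heq, mul_add, mul_add, p01 h hu hm1, zero_add] at hthis
    exact pair0a h (h.f00 u hu m0 hm0) (h.f0a u hu ma hma) hthis
  have hm0z : m0 = 0 := hm.2.2.1 _ hm0 (fun u hu => (hsplit u hu).1)
  have hmaz : ma = 0 := hm.2.2.2 _ hma (fun u hu => (hsplit u hu).2)
  have hmeq : f [a, p1 + p0] = m1 := by rw [heq, hm0z, hmaz, add_zero, add_zero]
  have hmA1 : f [a, p1 + p0] ∈ eigSet e (1 : F) := by rw [hmeq]; exact hm1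
  apply hm.1 _ hmA1
  intro t ht
  set k := 2 * r - 1 with hkdef
  set ts : List A := t :: List.replicate k e with hts
  have hlen : ts.length = 2 * r := by
    simp only [hts, List.length_cons, List.length_replicate, hkdef]; omega
  have htr := transport hf 2 ts hlen [a, p1 + p0]
  simp only [List.map_cons, List.map_nil] at htr
  have hTa : Lmul ts a = t * a := by
    show t * Lmul (List.replicate k e) a = _
    rw [lmul_rep_1 h k ha]
  have hTp : Lmul ts (p1 + p0) = t * p1 := by
    show t * Lmul (List.replicate k e) (p1 + p0) = _
    have hk1 : k = (2 * r - 2) + 1 := by omega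
    rw [hk1, lmul_rep_10 h _ h1 h0]
  have hL : Lmul ts (f [a, p1 + p0]) = t * f [a, p1 + p0] := by
    show t * Lmul (List.replicate k e) (f [a, p1 + p0]) = _
    rw [lmul_rep_1 h k hmA1]
  rw [hTa, hTp, hL] at htr
  have hz : f [t * a, t * p1] = 0 := gAA h hm hf (pa1 h ht ha) (pa1 h ht h1)
  rw [hz] at htr
  exact htr

/-- `f [p, q] = 0` for `p, q` both in `A₁ ⊕ A₀`. -/
theorem g10_10 {p1 p0 q1 q0 : A} (hp1 : p1 ∈ eigSet e (1 : F)) (hp0 : p0 ∈ eigSet e (0 : F))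
    (hq1 : q1 ∈ eigSet e (1 : F)) (hq0 : q0 ∈ eigSet e (0 : F)) :
    f [p1 + p0, q1 + q0] = 0 := by
  have hA := (hf.2.2.1 [p1 + p0] [q1, q0] (by simp) (by simp)).mpr
    (cross10 h hm hf hq1 hq0)
  simp only [List.cons_append, List.nil_append, List.sum_cons, List.sum_nil,
    add_zero] at hA
  have hft : f [p1 + p0, q0] = 0 := by
    rw [fpair_swap hf]
    exact g0_10 h hm hf hq0 hp1 hp0
  have hB := (hf.2.2.1 [q1] [p1 + p0, q0] (by simp) (by simp)).mpr hft
  simp only [List.cons_append, List.nil_append, List.sum_cons, List.sum_nil,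
    add_zero] at hB
  have hperm : f [p1 + p0, q1, q0] = f [q1, p1 + p0, q0] :=
    fperm hf (List.Perm.swap _ _ _)
  have hfin : f [q1, p1 + p0 + q0] = 0 := by
    rw [add_assoc]
    exact g1_10 h hm hf hq1 hp1 (mem_add hp0 hq0)
  rw [hA, hperm, ← hB, hfin]

/-- `f [p, η] = 0` for `p ∈ A₁ ⊕ A₀` and arbitrary `η`. -/
theorem g10_any {p1 p0 : A} (hp1 : p1 ∈ eigSet e (1 : F)) (hp0 : p0 ∈ eigSet e (0 : F))
    (η : A) : f [p1 + p0, η] = 0 := by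
  obtain ⟨n1, hn1, n0, hn0, na, hna, rfl⟩ := h.decomp η
  have hx : -na ∈ eigSet e α := mem_neg hna
  have hc := (hf.2.2.1 [p1 + p0] [-na, n1 + n0 + na] (by simp) (by simp)).mpr
    (gA_any h hm hf hx _)
  simp only [List.cons_append, List.nil_append, List.sum_cons, List.sum_nil,
    add_zero] at hc
  have hxsum : -na + (n1 + n0 + na) = n1 + n0 := by abel
  have hRHS : f [p1 + p0, -na, n1 + n0 + na] = 0 := by
    rw [← hc, hxsum]
    exact g10_10 h hm hf hp1 hp0 hn1 hn0
  have hLHS : f [-na, p1 + p0 + (n1 + n0 + na)] = 0 := gA_any h hm hf hx _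
  apply (hf.2.2.1 [-na] [p1 + p0, n1 + n0 + na] (by simp) (by simp)).mp
  simp only [List.cons_append, List.nil_append, List.sum_cons, List.sum_nil,
    add_zero]
  rw [hLHS]
  have hperm : f [-na, p1 + p0, n1 + n0 + na] = f [p1 + p0, -na, n1 + n0 + na] :=
    fperm hf (List.Perm.swap _ _ _)
  rw [hperm, hRHS]

/-- All pair values vanish. -/
theorem gzero (ζ η : A) : f [ζ, η] = 0 := by
  obtain ⟨z1, h1, z0, h0, za, ha, rfl⟩ := h.decomp ζ
  have hswap : f [z1 + z0 + za, η] = f [η, z1 + z0 + za] := fpair_swap hf _ _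
  have hA := (hf.2.2.1 [η] [z1 + z0, za] (by simp) (by simp)).mpr
    (cross10a h hm hf h1 h0 ha)
  simp only [List.cons_append, List.nil_append, List.sum_cons, List.sum_nil,
    add_zero] at hA
  have hB := (hf.2.2.1 [z1 + z0] [za, η] (by simp) (by simp)).mpr
    (gA_any h hm hf ha η)
  simp only [List.cons_append, List.nil_append, List.sum_cons, List.sum_nil,
    add_zero] at hB
  have hperm : f [η, z1 + z0, za] = f [z1 + z0, za, η] :=
    fperm hf ((List.Perm.swap (z1 + z0) η [za]).trans
      (List.Perm.cons _ (List.Perm.swap za η [])))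
  rw [hswap, hA, hperm, ← hB]
  exact g10_any h hm hf h1 h0 (za + η)

end Endgame

end JNF

/-- Theorem 4.1: on a `J(α)`-algebra satisfying the Martindale-like
conditions, every nullifying function is identically zero. -/
theorem jalg_nullifying_zero {F A : Type*} [Field F] [NonUnitalNonAssocCommRing A]
    [Module F A] [SMulCommClass F A A] [IsScalarTower F A A]
    (e : A) (α : F) (h : IsJAlg e α) (hm : MartindaleJ e α)
    (f : List A → A) (r : ℕ) (hf : IsNullifying f r) :
    ∀ l : List A, l ≠ [] → f l = 0 := by
  have key : ∀ n : ℕ, ∀ l : List A, l.length = n → l ≠ [] → f l = 0 := by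
    intro n
    induction n with
    | zero =>
        intro l hl hne
        rw [List.length_eq_zero_iff] at hl
        exact absurd hl hne
    | succ n ih =>
        intro l hl _
        rcases l with _ | ⟨z, l'⟩
        · simp at hl
        rcases l' with _ | ⟨w, rest⟩
        · exact hf.2.2.2.1 z
        have hlen2 : (w :: rest).length = n := by
          simp only [List.length_cons] at hl ⊢
          omega
        have hft : f (w :: rest) = 0 := ih (w :: rest) hlen2 (by simp)
        have hcol := (hf.2.2.1 [z] (w :: rest) (by simp) (by simp)).mpr hft
        simp only [List.cons_append, List.nil_append] at hcol
        rw [← hcol]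
        exact JNF.gzero h hm hf z _
  intro l hl
  exact key l.length l rfl hl
end
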